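/- Let π be a group, v : π → {±1} a homomorphism with v trivial on all elements of order two in case w is nontrivial, and suppose a Zπ-module A satisfies A ⊕ Zπ^k ≅ Iπ^v ⊕ Zπ^j for some k, j ≥ 0. If there is no g ∈ π of order two with w(g) = −1, then B_A : Z^w ⊗_{Zπ} Γ(A) → Her^w(A^†) is injective. -/

import Mathlib

open scoped TensorProduct

namespace Paper

variable {π G H : Type*} [Group π] [Group G] [Group H]

/-- The `v`-twisted augmentation map `ℤπ → ℤ`, `g ↦ v g`. -/
noncomputable def twistedAug (v : π →* ℤˣ) : MonoidAlgebra ℤ π →ₐ[ℤ] ℤ :=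
  MonoidAlgebra.lift ℤ ℤ π ((Units.coeHom ℤ).comp v)

/-- The `v`-twisted augmentation ideal `Iπ^v`. -/
noncomputable def twistedAugIdeal (v : π →* ℤˣ) : Ideal (MonoidAlgebra ℤ π) :=
  RingHom.ker (twistedAug v).toRingHom

/-- The (untwisted) augmentation ideal `Iπ`. -/
noncomputable def augIdeal (π : Type*) [Group π] : Ideal (MonoidAlgebra ℤ π) :=
  twistedAugIdeal (1 : π →* ℤˣ)

/-- Scalar multiplication by a fixed element of the group ring, as a `ℤ`-linear map. -/
noncomputable def smulMap (r : MonoidAlgebra ℤ π) (M : Type*) [AddCommGroup M]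
    [Module (MonoidAlgebra ℤ π) M] : M →ₗ[ℤ] M :=
  (DistribMulAction.toAddMonoidHom M r).toIntLinearMap

/-- `g ↦ w(g)·g⁻¹`, as a monoid hom to the multiplicative opposite of the group ring. -/
noncomputable def tauHom (w : π →* ℤˣ) : π →* (MonoidAlgebra ℤ π)ᵐᵒᵖ where
  toFun g := MulOpposite.op (MonoidAlgebra.single g⁻¹ ((w g : ℤ)))
  map_one' := by
    simp [MonoidAlgebra.one_def]
  map_mul' g h := by
    rw [show MulOpposite.op (MonoidAlgebra.single (g⁻¹ : π) ((w g : ℤ))) *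
        MulOpposite.op (MonoidAlgebra.single (h⁻¹ : π) ((w h : ℤ))) =
        MulOpposite.op (MonoidAlgebra.single (h⁻¹ : π) ((w h : ℤ)) *
          MonoidAlgebra.single (g⁻¹ : π) ((w g : ℤ))) from rfl]
    rw [MonoidAlgebra.single_mul_single]
    simp [mul_inv_rev, mul_comm]

/-- The `w`-twisted involution of the group ring, as an algebra map to the opposite ring. -/
noncomputable def tau (w : π →* ℤˣ) :
    MonoidAlgebra ℤ π →ₐ[ℤ] (MonoidAlgebra ℤ π)ᵐᵒᵖ :=
  MonoidAlgebra.lift ℤ _ π (tauHom w)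

/-- The `w`-twisted involution `x ↦ x̄` of the group ring. -/
noncomputable def conj (w : π →* ℤˣ) (x : MonoidAlgebra ℤ π) : MonoidAlgebra ℤ π :=
  (tau w x).unop

/-- Whitehead's `Γ(A)`, realized as the symmetric elements of `A ⊗[ℤ] A`. -/
noncomputable def Gamma (A : Type*) [AddCommGroup A] : Submodule ℤ (A ⊗[ℤ] A) :=
  LinearMap.eqLocus (TensorProduct.comm ℤ A A).toLinearMap LinearMap.id

/-- The subgroup of relations defining the coinvariants `ℤ^w ⊗_{ℤπ} Γ(A)` of `Γ(A)`
under the `w`-twisted diagonal action. -/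
noncomputable def gammaRel (w : π →* ℤˣ) (A : Type*) [AddCommGroup A]
    [Module (MonoidAlgebra ℤ π) A] : Submodule ℤ (A ⊗[ℤ] A) :=
  Submodule.span ℤ
    {x | ∃ (g : π) (y : A ⊗[ℤ] A), y ∈ Gamma A ∧
      x = TensorProduct.map (smulMap (MonoidAlgebra.of ℤ π g) A)
            (smulMap (MonoidAlgebra.of ℤ π g) A) y - (w g : ℤ) • y}

/-- The pairing underlying the map `B_A : ℤ^w ⊗ Γ(A) → Her^w(A^†)`:
`a ⊗ b ↦ ((f, g) ↦ conj (f a) * g b)`. -/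
noncomputable def BMap (w : π →* ℤˣ) (A : Type*) [AddCommGroup A]
    [Module (MonoidAlgebra ℤ π) A] :
    (A ⊗[ℤ] A) →ₗ[ℤ]
      ((A →ₗ[MonoidAlgebra ℤ π] MonoidAlgebra ℤ π) →
        (A →ₗ[MonoidAlgebra ℤ π] MonoidAlgebra ℤ π) → MonoidAlgebra ℤ π) :=
  TensorProduct.lift <| LinearMap.mk₂ ℤ
    (fun a b => fun f g => conj w (f a) * g b)
    (fun a a' b => by funext f g; simp [conj, map_add, add_mul])
    (fun n a b => by
      funext f g
      simp only [Pi.smul_apply, map_zsmul, conj, MulOpposite.unop_smul, smul_mul_assoc])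
    (fun a b b' => by funext f g; simp [map_add, mul_add])
    (fun n a b => by
      funext f g
      simp only [Pi.smul_apply, map_zsmul, mul_smul_comm])

/-- The relation submodule defining the induced module `Ind_G^π A = ℤπ ⊗_{ℤG} A`. -/
noncomputable def indRel (ι : G →* π) (A : Type*) [AddCommGroup A]
    [Module (MonoidAlgebra ℤ G) A] :
    Submodule (MonoidAlgebra ℤ π) (MonoidAlgebra ℤ π ⊗[ℤ] A) :=
  Submodule.span (MonoidAlgebra ℤ π)
    {z | ∃ (s : G) (a : A),
      z = (MonoidAlgebra.of ℤ π (ι s)) ⊗ₜ[ℤ] a -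
          (1 : MonoidAlgebra ℤ π) ⊗ₜ[ℤ] ((MonoidAlgebra.of ℤ G s) • a)}

/-- The induced module `Ind_G^π A = ℤπ ⊗_{ℤG} A`, as a left `ℤπ`-module. -/
noncomputable abbrev IndMod (ι : G →* π) (A : Type*) [AddCommGroup A]
    [Module (MonoidAlgebra ℤ G) A] :=
  (MonoidAlgebra ℤ π ⊗[ℤ] A) ⧸ indRel ι A

/-- The canonical projection onto the induced module. -/
noncomputable def IndMod.mk (ι : G →* π) (A : Type*) [AddCommGroup A]
    [Module (MonoidAlgebra ℤ G) A] :
    (MonoidAlgebra ℤ π ⊗[ℤ] A) →ₗ[MonoidAlgebra ℤ π] IndMod ι A :=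
  (indRel ι A).mkQ

section Aux

variable {π : Type*} [Group π]

/-- Diagonal action of `g` on `M ⊗[ℤ] M`. -/
noncomputable def TgMap (g : π) (M : Type*) [AddCommGroup M]
    [Module (MonoidAlgebra ℤ π) M] : M ⊗[ℤ] M →ₗ[ℤ] M ⊗[ℤ] M :=
  TensorProduct.map (smulMap (MonoidAlgebra.of ℤ π g) M) (smulMap (MonoidAlgebra.of ℤ π g) M)

lemma smulMap_apply {M : Type*} [AddCommGroup M] [Module (MonoidAlgebra ℤ π) M]
    (r : MonoidAlgebra ℤ π) (x : M) : smulMap r M x = r • x := rfl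

lemma mem_Gamma {A : Type*} [AddCommGroup A] {y : A ⊗[ℤ] A} :
    y ∈ Gamma A ↔ TensorProduct.comm ℤ A A y = y := Iff.rfl

lemma gammaRel_eq (w : π →* ℤˣ) (A : Type*) [AddCommGroup A]
    [Module (MonoidAlgebra ℤ π) A] :
    gammaRel w A = Submodule.span ℤ
      {x | ∃ (g : π) (y : A ⊗[ℤ] A), y ∈ Gamma A ∧
        x = TgMap g A y - (w g : ℤ) • y} := rfl

lemma comm_map_comm {M N : Type*} [AddCommGroup M] [AddCommGroup N]
    (f g : M →ₗ[ℤ] N) (y : M ⊗[ℤ] M) :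
    TensorProduct.comm ℤ N N (TensorProduct.map f g y) =
      TensorProduct.map g f (TensorProduct.comm ℤ M M y) := by
  induction y using TensorProduct.induction_on with
  | zero => simp
  | tmul a b => simp
  | add x y hx hy => simp [hx, hy]

lemma BMap_tmul (w : π →* ℤˣ) {A : Type*} [AddCommGroup A]
    [Module (MonoidAlgebra ℤ π) A] (a b : A)
    (f g : A →ₗ[MonoidAlgebra ℤ π] MonoidAlgebra ℤ π) :
    BMap w A (a ⊗ₜ[ℤ] b) f g = conj w (f a) * g b := by
  rfl

lemma BMap_map (w : π →* ℤˣ) {M M' : Type*} [AddCommGroup M] [AddCommGroup M']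
    [Module (MonoidAlgebra ℤ π) M] [Module (MonoidAlgebra ℤ π) M']
    (φ : M →ₗ[MonoidAlgebra ℤ π] M') (y : M ⊗[ℤ] M)
    (f g : M' →ₗ[MonoidAlgebra ℤ π] MonoidAlgebra ℤ π) :
    BMap w M' (TensorProduct.map (φ.restrictScalars ℤ) (φ.restrictScalars ℤ) y) f g =
      BMap w M y (f ∘ₗ φ) (g ∘ₗ φ) := by
  induction y using TensorProduct.induction_on with
  | zero => simp
  | tmul a b => simp [BMap_tmul]
  | add x y hx hy =>
      simp only [map_add] at *
      simp [Pi.add_apply, hx, hy]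

lemma TgMap_map {M M' : Type*} [AddCommGroup M] [AddCommGroup M']
    [Module (MonoidAlgebra ℤ π) M] [Module (MonoidAlgebra ℤ π) M']
    (ψ : M →ₗ[MonoidAlgebra ℤ π] M') (g : π) (y : M ⊗[ℤ] M) :
    TensorProduct.map (ψ.restrictScalars ℤ) (ψ.restrictScalars ℤ) (TgMap g M y) =
      TgMap g M' (TensorProduct.map (ψ.restrictScalars ℤ) (ψ.restrictScalars ℤ) y) := by
  induction y using TensorProduct.induction_on with
  | zero => simp
  | tmul a b =>
      show ψ (MonoidAlgebra.of ℤ π g • a) ⊗ₜ[ℤ] ψ (MonoidAlgebra.of ℤ π g • b) =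
        (MonoidAlgebra.of ℤ π g • ψ a) ⊗ₜ[ℤ] (MonoidAlgebra.of ℤ π g • ψ b)
      rw [map_smul, map_smul]
  | add x y hx hy => simp [map_add, hx, hy]

lemma Gamma_map {M M' : Type*} [AddCommGroup M] [AddCommGroup M']
    (ψ : M →ₗ[ℤ] M') {y : M ⊗[ℤ] M} (hy : y ∈ Gamma M) :
    TensorProduct.map ψ ψ y ∈ Gamma M' := by
  rw [mem_Gamma] at hy ⊢
  rw [comm_map_comm, hy]

lemma gammaRel_map (w : π →* ℤˣ) {M M' : Type*} [AddCommGroup M] [AddCommGroup M']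
    [Module (MonoidAlgebra ℤ π) M] [Module (MonoidAlgebra ℤ π) M']
    (ψ : M →ₗ[MonoidAlgebra ℤ π] M') {x : M ⊗[ℤ] M} (hx : x ∈ gammaRel w M) :
    TensorProduct.map (ψ.restrictScalars ℤ) (ψ.restrictScalars ℤ) x ∈ gammaRel w M' := by
  rw [gammaRel_eq] at hx ⊢
  induction hx using Submodule.span_induction with
  | mem x hxm =>
      obtain ⟨g, y, hy, rfl⟩ := hxm
      apply Submodule.subset_span
      refine ⟨g, TensorProduct.map (ψ.restrictScalars ℤ) (ψ.restrictScalars ℤ) y,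
        Gamma_map _ hy, ?_⟩
      rw [map_sub, TgMap_map, map_smul]
  | zero => simp
  | add x y _ _ hx hy => rw [map_add]; exact add_mem hx hy
  | smul a x _ hx => rw [map_smul]; exact Submodule.smul_mem _ _ hx

lemma map_map_id {M M' : Type*} [AddCommGroup M] [AddCommGroup M']
    (φ : M →ₗ[ℤ] M') (ψ : M' →ₗ[ℤ] M) (hψφ : ∀ x, ψ (φ x) = x)
    (z : M ⊗[ℤ] M) :
    TensorProduct.map ψ ψ (TensorProduct.map φ φ z) = z := by
  induction z using TensorProduct.induction_on with
  | zero => simp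
  | tmul a b => simp [hψφ]
  | add x y hx hy => simp [map_add, hx, hy]

/-- Transfer of the statement along a split injection of `ℤπ`-modules. -/
lemma statement_transfer (w : π →* ℤˣ) {M M' : Type*} [AddCommGroup M] [AddCommGroup M']
    [Module (MonoidAlgebra ℤ π) M] [Module (MonoidAlgebra ℤ π) M']
    (φ : M →ₗ[MonoidAlgebra ℤ π] M') (ψ : M' →ₗ[MonoidAlgebra ℤ π] M)
    (hψφ : ∀ x, ψ (φ x) = x)
    (h' : ∀ y ∈ Gamma M', BMap w M' y = 0 → y ∈ gammaRel w M') :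
    ∀ y ∈ Gamma M, BMap w M y = 0 → y ∈ gammaRel w M := by
  intro y hy hB
  set φℤ := φ.restrictScalars ℤ with hφℤ
  set ψℤ := ψ.restrictScalars ℤ with hψℤ
  have hy' : TensorProduct.map φℤ φℤ y ∈ Gamma M' := Gamma_map _ hy
  have hB' : BMap w M' (TensorProduct.map φℤ φℤ y) = 0 := by
    funext f g
    rw [BMap_map, hB]
    rfl
  have hrel := h' _ hy' hB'
  have := gammaRel_map w ψ hrel
  rwa [map_map_id φℤ ψℤ hψφ] at this

end Aux
section Free

set_option linter.unusedSectionVars false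
set_option synthInstance.maxHeartbeats 1000000
set_option maxHeartbeats 1000000

variable {π : Type*} [Group π] {ι : Type*} [Fintype ι] [DecidableEq ι]

/-- The free module `ι → ℤπ` as a Finsupp over `ι × π`. -/
noncomputable def eOneF (π ι : Type*) [Group π] [Fintype ι] [DecidableEq ι] :
    (ι → MonoidAlgebra ℤ π) ≃ₗ[ℤ] (ι × π →₀ ℤ) :=
  (Finsupp.linearEquivFunOnFinite ℤ (MonoidAlgebra ℤ π) ι).symm ≪≫ₗ
    Finsupp.mapRange.linearEquiv (MonoidAlgebra.coeffLinearEquiv ℤ) ≪≫ₗ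
    (Finsupp.finsuppProdLEquiv ℤ).symm

/-- Basis vector of `ι → ℤπ` indexed by `(i, a)`. -/
noncomputable def bas (p : ι × π) : ι → MonoidAlgebra ℤ π :=
  Pi.single p.1 (MonoidAlgebra.single p.2 1)

lemma eOneF_symm_single (p : ι × π) (n : ℤ) :
    (eOneF π ι).symm (Finsupp.single p n) = n • bas p := by
  have h1 : Finsupp.finsuppProdLEquiv ℤ (Finsupp.single p n) =
      Finsupp.single p.1 (Finsupp.single p.2 n) := by
    ext x b
    rw [show Finsupp.finsuppProdLEquiv ℤ (Finsupp.single p n) x b = Finsupp.single p n (x, b)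
      from rfl]
    rcases eq_or_ne p (x, b) with h | h
    · subst h; simp
    · rw [Finsupp.single_eq_of_ne h.symm]
      by_cases h1 : p.1 = x
      · by_cases h2 : p.2 = b
        · exact absurd (Prod.ext_iff.mpr ⟨h1, h2⟩) h
        · simp [Finsupp.single_apply, h1, h2]
      · simp [Finsupp.single_apply, h1]
  have : (eOneF π ι).symm (Finsupp.single p n) =
      Finsupp.linearEquivFunOnFinite ℤ (MonoidAlgebra ℤ π) ι
        (Finsupp.mapRange.linearEquiv (MonoidAlgebra.coeffLinearEquiv ℤ).symm
          (Finsupp.finsuppProdLEquiv ℤ (Finsupp.single p n))) := rfl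
  rw [this, h1, Finsupp.mapRange.linearEquiv_apply, Finsupp.mapRange_single,
    Finsupp.linearEquivFunOnFinite_single]
  funext j
  rcases eq_or_ne j p.1 with h | h
  · subst h
    simp only [Pi.single_eq_same, bas, Pi.smul_apply, Pi.single_eq_same]
    ext a
    simp [MonoidAlgebra.single_apply, Finsupp.single_apply]
  · simp [Pi.single_eq_of_ne h, bas, Pi.single_eq_of_ne h]

/-- The tensor square of the free module as a Finsupp. -/
noncomputable def EEq (π ι : Type*) [Group π] [Fintype ι] [DecidableEq ι] :
    ((ι → MonoidAlgebra ℤ π) ⊗[ℤ] (ι → MonoidAlgebra ℤ π)) ≃ₗ[ℤ]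
      ((ι × π) × (ι × π) →₀ ℤ) :=
  (TensorProduct.congr (eOneF π ι) (eOneF π ι)) ≪≫ₗ finsuppTensorFinsupp' ℤ (ι × π) (ι × π)

lemma EEq_symm_single (P : (ι × π) × (ι × π)) (n : ℤ) :
    (EEq π ι).symm (Finsupp.single P n) = n • (bas P.1 ⊗ₜ[ℤ] bas P.2) := by
  have h1 : (finsuppTensorFinsupp' ℤ (ι × π) (ι × π)).symm (Finsupp.single P n) =
      Finsupp.single P.1 n ⊗ₜ[ℤ] Finsupp.single P.2 1 := by
    have := finsuppTensorFinsupp'_symm_single_mul ℤ (ι × π) (ι × π) P n 1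
    rwa [mul_one] at this
  have h2 : (EEq π ι).symm (Finsupp.single P n) =
      (TensorProduct.congr (eOneF π ι) (eOneF π ι)).symm
        ((finsuppTensorFinsupp' ℤ (ι × π) (ι × π)).symm (Finsupp.single P n)) := rfl
  rw [h2, h1, TensorProduct.congr_symm_tmul, eOneF_symm_single, eOneF_symm_single,
    TensorProduct.smul_tmul', one_smul]

/-- Diagonal left-translation on index pairs. -/
def actP (g : π) (P : (ι × π) × (ι × π)) : (ι × π) × (ι × π) :=
  ((P.1.1, g * P.1.2), (P.2.1, g * P.2.2))

lemma actP_actP (g h : π) (P : (ι × π) × (ι × π)) :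
    actP g (actP h P) = actP (g * h) P := by
  simp [actP, mul_assoc]

lemma actP_injective (g : π) : Function.Injective (actP (ι := ι) g) := by
  intro P Q h
  have := congrArg (actP g⁻¹) h
  simpa [actP_actP, actP] using this

lemma actP_swap (g : π) (P : (ι × π) × (ι × π)) :
    actP g P.swap = (actP g P).swap := rfl

lemma of_smul_bas (g : π) (p : ι × π) :
    (MonoidAlgebra.of ℤ π g) • bas p = bas (p.1, g * p.2) := by
  funext j
  rcases eq_or_ne j p.1 with h | h
  · subst h
    simp only [bas, Pi.smul_apply, Pi.single_eq_same, smul_eq_mul]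
    rw [show (MonoidAlgebra.of ℤ π g : MonoidAlgebra ℤ π) =
      MonoidAlgebra.single g 1 from rfl, MonoidAlgebra.single_mul_single, mul_one]
  · simp [bas, Pi.single_eq_of_ne h]

lemma EEq_symm_mapDomain_act (g : π) (c : (ι × π) × (ι × π) →₀ ℤ) :
    (EEq π ι).symm (Finsupp.mapDomain (actP g) c) =
      TgMap g (ι → MonoidAlgebra ℤ π) ((EEq π ι).symm c) := by
  induction c using Finsupp.induction_linear with
  | zero => simp
  | add f f' hf hf' => simp only [Finsupp.mapDomain_add, map_add, hf, hf']
  | single P n =>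
      rw [Finsupp.mapDomain_single, EEq_symm_single, EEq_symm_single, map_smul]
      congr 1
      show bas ((actP g P).1) ⊗ₜ[ℤ] bas ((actP g P).2) = TgMap g _ (bas P.1 ⊗ₜ[ℤ] bas P.2)
      rw [show TgMap g (ι → MonoidAlgebra ℤ π) (bas P.1 ⊗ₜ[ℤ] bas P.2) =
        ((MonoidAlgebra.of ℤ π g) • bas P.1) ⊗ₜ[ℤ] ((MonoidAlgebra.of ℤ π g) • bas P.2)
        from rfl, of_smul_bas, of_smul_bas]
      rfl

lemma EEq_symm_mapDomain_swap (c : (ι × π) × (ι × π) →₀ ℤ) :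
    (EEq π ι).symm (Finsupp.mapDomain Prod.swap c) =
      TensorProduct.comm ℤ _ _ ((EEq π ι).symm c) := by
  induction c using Finsupp.induction_linear with
  | zero => simp
  | add f f' hf hf' => simp only [Finsupp.mapDomain_add, map_add, hf, hf']
  | single P n =>
      rw [Finsupp.mapDomain_single, EEq_symm_single, EEq_symm_single]
      conv_rhs => rw [TensorProduct.smul_tmul', TensorProduct.comm_tmul,
        ← TensorProduct.smul_tmul, ← TensorProduct.smul_tmul']
      rfl

end Free
section FreeB

set_option linter.unusedSectionVars false
set_option synthInstance.maxHeartbeats 1000000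
set_option maxHeartbeats 1000000

variable {π : Type*} [Group π] {ι : Type*} [Fintype ι] [DecidableEq ι] [DecidableEq π]

lemma conj_zero (w : π →* ℤˣ) : conj w 0 = 0 := by
  simp [conj]

lemma conj_single (w : π →* ℤˣ) (a : π) (c : ℤ) :
    conj w (MonoidAlgebra.single a c) = MonoidAlgebra.single a⁻¹ (c * (w a : ℤ)) := by
  unfold conj tau
  rw [MonoidAlgebra.lift_single]
  show (c • MulOpposite.op (MonoidAlgebra.single a⁻¹ ((w a : ℤ)))).unop = _
  rw [MulOpposite.unop_smul, MulOpposite.unop_op, MonoidAlgebra.smul_single']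

/-- The weight function of the orbit-sum equations. -/
def phiW (w : π →* ℤˣ) (i l : ι) (x : π) (P : (ι × π) × (ι × π)) : ℤ :=
  if i = P.1.1 ∧ l = P.2.1 ∧ P.1.2⁻¹ * P.2.2 = x then (w P.1.2 : ℤ) else 0

lemma proj_bas (i : ι) (p : ι × π) :
    (LinearMap.proj i : (ι → MonoidAlgebra ℤ π) →ₗ[MonoidAlgebra ℤ π] MonoidAlgebra ℤ π)
      (bas p) = if i = p.1 then MonoidAlgebra.single p.2 1 else 0 := by
  simp [bas, Pi.single_apply]

lemma BMap_EEq_symm (w : π →* ℤˣ) (c : (ι × π) × (ι × π) →₀ ℤ) (i l : ι) :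
    BMap w (ι → MonoidAlgebra ℤ π) ((EEq π ι).symm c)
      (LinearMap.proj i) (LinearMap.proj l) =
      c.sum (fun P n => n • (if i = P.1.1 ∧ l = P.2.1 then
        MonoidAlgebra.single (P.1.2⁻¹ * P.2.2) ((w P.1.2 : ℤ)) else 0)) := by
  induction c using Finsupp.induction_linear with
  | zero => simp
  | add f f' hf hf' =>
      rw [map_add, map_add, Pi.add_apply, Pi.add_apply, hf, hf',
        Finsupp.sum_add_index (fun _ _ => by rw [zero_smul]) (fun _ _ _ _ => by rw [add_smul])]
  | single P n =>
      rw [EEq_symm_single, Finsupp.sum_single_index (by rw [zero_smul]),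
        map_smul, Pi.smul_apply, Pi.smul_apply, BMap_tmul, proj_bas, proj_bas]
      congr 1
      by_cases h1 : i = P.1.1
      · by_cases h2 : l = P.2.1
        · rw [if_pos h1, if_pos h2, if_pos ⟨h1, h2⟩, conj_single,
            MonoidAlgebra.single_mul_single]
          congr 1 <;> simp
        · rw [if_pos h1, if_neg h2,
            if_neg (show ¬(i = P.1.1 ∧ l = P.2.1) from fun hc => h2 hc.2), mul_zero]
      · rw [if_neg h1,
          if_neg (show ¬(i = P.1.1 ∧ l = P.2.1) from fun hc => h1 hc.1),
          conj_zero, zero_mul]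

lemma BMap_coeff (w : π →* ℤˣ) (c : (ι × π) × (ι × π) →₀ ℤ) (i l : ι) (x : π)
    (h0 : BMap w (ι → MonoidAlgebra ℤ π) ((EEq π ι).symm c)
      (LinearMap.proj i) (LinearMap.proj l) = 0) :
    c.sum (fun P n => phiW w i l x P * n) = 0 := by
  rw [BMap_EEq_symm] at h0
  have h0' : (c.sum fun P n => (n • (if i = P.1.1 ∧ l = P.2.1 then
      Finsupp.single (P.1.2⁻¹ * P.2.2) ((w P.1.2 : ℤ)) else 0) : π →₀ ℤ)) = 0 := by
    have := congrArg MonoidAlgebra.coeff h0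
    rw [MonoidAlgebra.coeff_finsuppSum] at this
    exact (Finsupp.sum_congr fun P _ => by split_ifs <;> rfl).trans this
  have h1 : (c.sum fun P n => ((n • (if i = P.1.1 ∧ l = P.2.1 then
      Finsupp.single (P.1.2⁻¹ * P.2.2) ((w P.1.2 : ℤ)) else 0) : π →₀ ℤ)) x) = 0 := by
    rw [← Finsupp.sum_apply, h0']
    rfl
  rw [← h1]
  apply Finsupp.sum_congr
  intro P _
  rw [Finsupp.smul_apply]
  by_cases h2 : i = P.1.1 ∧ l = P.2.1
  · rw [if_pos h2]
    by_cases h3 : P.1.2⁻¹ * P.2.2 = x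
    · rw [phiW, if_pos ⟨h2.1, h2.2, h3⟩, Finsupp.single_apply, if_pos h3,
        smul_eq_mul, mul_comm]
    · rw [phiW, if_neg (show ¬(i = P.1.1 ∧ l = P.2.1 ∧ P.1.2⁻¹ * P.2.2 = x) from
        fun hc => h3 hc.2.2), Finsupp.single_apply, if_neg h3, smul_zero, zero_mul]
  · rw [if_neg h2, phiW,
      if_neg (show ¬(i = P.1.1 ∧ l = P.2.1 ∧ P.1.2⁻¹ * P.2.2 = x) from
        fun hc => h2 ⟨hc.1, hc.2.1⟩), Finsupp.zero_apply, smul_zero, zero_mul]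

/-- Symmetrization of a point mass. -/
noncomputable def symF (P : (ι × π) × (ι × π)) : (ι × π) × (ι × π) →₀ ℤ :=
  if P.swap = P then Finsupp.single P 1 else Finsupp.single P 1 + Finsupp.single P.swap 1

lemma symF_symm (P Q : (ι × π) × (ι × π)) : symF P Q.swap = symF P Q := by
  unfold symF
  have e1 : (P = Q.swap) = (P.swap = Q) :=
    propext ⟨fun h' => by rw [h', Prod.swap_swap], fun h' => by rw [← h', Prod.swap_swap]⟩
  have e2 : (P.swap = Q.swap) = (P = Q) :=
    propext ⟨fun h' => by have := congrArg Prod.swap h'; simpa using this,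
      fun h' => by rw [h']⟩
  by_cases h : P.swap = P
  · have e3 : (P = Q.swap) = (P = Q) := by rw [e1, h]
    rw [if_pos h, Finsupp.single_apply, Finsupp.single_apply]
    simp only [e3]
  · rw [if_neg h]
    simp only [Finsupp.add_apply, Finsupp.single_apply]
    simp only [e1, e2]
    rw [add_comm]

lemma symF_self (P : (ι × π) × (ι × π)) : symF P P = 1 := by
  unfold symF
  by_cases h : P.swap = P
  · rw [if_pos h, Finsupp.single_apply, if_pos rfl]
  · rw [if_neg h]
    simp [Finsupp.single_apply, h]

lemma symF_ne {P Q : (ι × π) × (ι × π)} (h1 : Q ≠ P) (h2 : Q ≠ P.swap) :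
    symF P Q = 0 := by
  unfold symF
  by_cases h : P.swap = P
  · rw [if_pos h, Finsupp.single_apply, if_neg (fun hh => h1 hh.symm)]
  · rw [if_neg h]
    simp only [Finsupp.add_apply, Finsupp.single_apply]
    rw [if_neg (fun hh => h1 hh.symm), if_neg (fun hh => h2 hh.symm), add_zero]

lemma mapDomain_actP_symF (g : π) (P : (ι × π) × (ι × π)) :
    Finsupp.mapDomain (actP g) (symF P) = symF (actP g P) := by
  unfold symF
  have hcond : ((actP g P).swap = actP g P) ↔ (P.swap = P) := by
    rw [← actP_swap]
    exact ⟨fun h => actP_injective g h, fun h => by rw [h]⟩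
  by_cases h : P.swap = P
  · rw [if_pos h, if_pos (hcond.mpr h), Finsupp.mapDomain_single]
  · rw [if_neg h, if_neg (fun hc => h (hcond.mp hc)), Finsupp.mapDomain_add,
      Finsupp.mapDomain_single, Finsupp.mapDomain_single, actP_swap]

lemma phiW_actP (w : π →* ℤˣ) (i l : ι) (x : π) (g : π) (P : (ι × π) × (ι × π)) :
    phiW w i l x (actP g P) = (w g : ℤ) * phiW w i l x P := by
  unfold phiW
  have hcond : (i = (actP g P).1.1 ∧ l = (actP g P).2.1 ∧
      (actP g P).1.2⁻¹ * (actP g P).2.2 = x) ↔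
      (i = P.1.1 ∧ l = P.2.1 ∧ P.1.2⁻¹ * P.2.2 = x) := by
    unfold actP
    simp only [mul_inv_rev]
    constructor
    · rintro ⟨ha, hb, hc⟩
      refine ⟨ha, hb, ?_⟩
      rw [← hc]
      group
    · rintro ⟨ha, hb, hc⟩
      refine ⟨ha, hb, ?_⟩
      rw [← hc]
      group
  by_cases h : (i = P.1.1 ∧ l = P.2.1 ∧ P.1.2⁻¹ * P.2.2 = x)
  · rw [if_pos (hcond.mpr h), if_pos h]
    show ((w (g * P.1.2) : ℤˣ) : ℤ) = _
    rw [map_mul]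
    push_cast
    ring
  · rw [if_neg (fun hc => h (hcond.mp hc)), if_neg h, mul_zero]

lemma rel_sum_zero (w : π →* ℤˣ) (g : π) (e : (ι × π) × (ι × π) →₀ ℤ)
    (i l : ι) (x : π) :
    ((Finsupp.mapDomain (actP g) e - (w g : ℤ) • e).sum
      fun P n => phiW w i l x P * n) = 0 := by
  rw [Finsupp.sum_sub_index (fun _ _ _ => by ring)]
  rw [Finsupp.sum_mapDomain_index (fun _ => by ring) (fun _ _ _ => by ring)]
  rw [Finsupp.sum_smul_index' (fun _ => by ring)]
  have hc : (e.sum fun P n => phiW w i l x (actP g P) * n) =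
      (e.sum fun P n => phiW w i l x P * ((w g : ℤ) • n)) :=
    Finsupp.sum_congr (fun P _ => by rw [phiW_actP, smul_eq_mul]; ring)
  rw [hc, sub_self]

lemma core_span (w : π →* ℤˣ) (h2 : ∀ g : π, g * g = 1 → w g = 1) :
    ∀ (n : ℕ) (c : (ι × π) × (ι × π) →₀ ℤ), c.support.card ≤ n →
      (∀ P, c P.swap = c P) →
      (∀ (i l : ι) (x : π), c.sum (fun P m => phiW w i l x P * m) = 0) →
      c ∈ Submodule.span ℤ {d : (ι × π) × (ι × π) →₀ ℤ |
        ∃ (g : π) (e : (ι × π) × (ι × π) →₀ ℤ), (∀ Q, e Q.swap = e Q) ∧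
          d = Finsupp.mapDomain (actP g) e - (w g : ℤ) • e} := by
  intro n
  induction n with
  | zero =>
      intro c hcard _ _
      have : c = 0 := by
        rw [← Finsupp.support_eq_empty, ← Finset.card_eq_zero]
        omega
      rw [this]; exact Submodule.zero_mem _
  | succ n IH =>
      intro c hcard hsym hB
      by_cases hc0 : c = 0
      · rw [hc0]; exact Submodule.zero_mem _
      obtain ⟨P₀, hP₀⟩ := Finsupp.support_nonempty_iff.mpr hc0
      have hP₀c : c P₀ ≠ 0 := Finsupp.mem_support_iff.mp hP₀
      have hP₀s : P₀.swap ∈ c.support := by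
        rw [Finsupp.mem_support_iff, hsym]; exact hP₀c
      have hφ₀ : phiW w P₀.1.1 P₀.2.1 (P₀.1.2⁻¹ * P₀.2.2) P₀ = (w P₀.1.2 : ℤ) :=
        if_pos ⟨rfl, rfl, rfl⟩
      by_cases hcase : ∃ P₁ ∈ c.support,
          (P₀.1.1 = P₁.1.1 ∧ P₀.2.1 = P₁.2.1 ∧
            P₁.1.2⁻¹ * P₁.2.2 = P₀.1.2⁻¹ * P₀.2.2) ∧ P₁ ≠ P₀ ∧ P₁ ≠ P₀.swap
      · obtain ⟨P₁, hP₁s, horb, hne0, hneS⟩ := hcase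
        obtain ⟨horb1, horb2, horb3⟩ := horb
        obtain ⟨g, hg⟩ : ∃ g, actP g P₀ = P₁ := by
          refine ⟨P₁.1.2 * P₀.1.2⁻¹, ?_⟩
          have e1 : P₁.1.2 * P₀.1.2⁻¹ * P₀.1.2 = P₁.1.2 := inv_mul_cancel_right _ _
          have e2 : P₁.1.2 * P₀.1.2⁻¹ * P₀.2.2 = P₁.2.2 := by
            rw [mul_assoc, ← horb3]
            group
          exact Prod.ext_iff.mpr ⟨Prod.ext_iff.mpr ⟨horb1, e1⟩,
            Prod.ext_iff.mpr ⟨horb2, e2⟩⟩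
        set e' : (ι × π) × (ι × π) →₀ ℤ := c P₁ • symF P₀ with he'
        set rel : (ι × π) × (ι × π) →₀ ℤ :=
          Finsupp.mapDomain (actP g) e' - (w g : ℤ) • e' with hrel
        have he'symm : ∀ Q, e' Q.swap = e' Q := fun Q => by
          rw [he', Finsupp.smul_apply, Finsupp.smul_apply, symF_symm]
        have hrelval : ∀ Q, rel Q =
            c P₁ * symF P₁ Q - (w g : ℤ) * (c P₁ * symF P₀ Q) := by
          intro Q
          rw [hrel, Finsupp.sub_apply, he', Finsupp.mapDomain_smul,
            mapDomain_actP_symF, hg]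
          simp only [Finsupp.smul_apply, smul_eq_mul]
          try ring
        set c₂ := c - rel with hc₂
        have hc₂val : ∀ Q, c₂ Q =
            c Q - (c P₁ * symF P₁ Q - (w g : ℤ) * (c P₁ * symF P₀ Q)) := fun Q => by
          rw [hc₂, Finsupp.sub_apply, hrelval]
        have hc₂sym : ∀ Q, c₂ Q.swap = c₂ Q := fun Q => by
          rw [hc₂val, hc₂val, hsym, symF_symm, symF_symm]
        have hc₂B : ∀ (i l : ι) (x : π),
            c₂.sum (fun P m => phiW w i l x P * m) = 0 := by
          intro i l x
          rw [hc₂, Finsupp.sum_sub_index (fun _ _ _ => by ring), hB, hrel, he',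
            rel_sum_zero, sub_zero]
        have hP₁swap_s : P₁.swap ∈ c.support := by
          rw [Finsupp.mem_support_iff, hsym]
          exact Finsupp.mem_support_iff.mp hP₁s
        have hsub : c₂.support ⊆ c.support.erase P₁ := by
          intro Q hQ
          have hQ' := Finsupp.mem_support_iff.mp hQ
          have hQmem : Q ∈ c.support := by
            by_contra hQn
            have hcQ : c Q = 0 := Finsupp.notMem_support_iff.mp hQn
            have hz1 : symF P₁ Q = 0 :=
              symF_ne (fun h => hQn (h ▸ hP₁s)) (fun h => hQn (h ▸ hP₁swap_s))
            have hz0 : symF P₀ Q = 0 :=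
              symF_ne (fun h => hQn (h ▸ hP₀)) (fun h => hQn (h ▸ hP₀s))
            apply hQ'
            rw [hc₂val, hcQ, hz1, hz0]
            ring
          have hQne : Q ≠ P₁ := by
            rintro rfl
            apply hQ'
            rw [hc₂val, symF_self, symF_ne hne0 hneS]
            ring
          exact Finset.mem_erase.mpr ⟨hQne, hQmem⟩
        have hcard₂ : c₂.support.card ≤ n := by
          have h1 := Finset.card_le_card hsub
          rw [Finset.card_erase_of_mem hP₁s] at h1
          have h2' := Finset.card_pos.mpr ⟨P₁, hP₁s⟩
          omega
        have hmem₂ := IH c₂ hcard₂ hc₂sym hc₂B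
        have hsplit : c = c₂ + rel := by rw [hc₂, sub_add_cancel]
        rw [hsplit]
        exact Submodule.add_mem _ hmem₂
          (Submodule.subset_span ⟨g, e', he'symm, hrel⟩)
      · exfalso
        push_neg at hcase
        have hB0 := hB P₀.1.1 P₀.2.1 (P₀.1.2⁻¹ * P₀.2.2)
        have hsum : ∑ P ∈ c.support,
            phiW w P₀.1.1 P₀.2.1 (P₀.1.2⁻¹ * P₀.2.2) P * c P = 0 := hB0
        have hsub : ({P₀, P₀.swap} : Finset ((ι × π) × (ι × π))) ⊆ c.support := by
          intro Q hQ
          rcases Finset.mem_insert.mp hQ with h | h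
          · rw [h]; exact hP₀
          · rw [Finset.mem_singleton.mp h]; exact hP₀s
        have hzero : ∀ Q ∈ c.support,
            Q ∉ ({P₀, P₀.swap} : Finset ((ι × π) × (ι × π))) →
            phiW w P₀.1.1 P₀.2.1 (P₀.1.2⁻¹ * P₀.2.2) Q * c Q = 0 := by
          intro Q hQs hQn
          by_cases hcond : (P₀.1.1 = Q.1.1 ∧ P₀.2.1 = Q.2.1 ∧
              Q.1.2⁻¹ * Q.2.2 = P₀.1.2⁻¹ * P₀.2.2)
          · exfalso
            apply hQn
            by_cases hq0 : Q = P₀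
            · rw [hq0]; exact Finset.mem_insert_self _ _
            · rw [hcase Q hQs hcond hq0]
              exact Finset.mem_insert_of_mem (Finset.mem_singleton_self _)
          · rw [phiW, if_neg hcond, zero_mul]
        have h5 : ∑ P ∈ ({P₀, P₀.swap} : Finset ((ι × π) × (ι × π))),
            phiW w P₀.1.1 P₀.2.1 (P₀.1.2⁻¹ * P₀.2.2) P * c P = 0 := by
          rw [Finset.sum_subset hsub hzero]
          exact hsum
        by_cases hself : P₀.swap = P₀
        · rw [show ({P₀, P₀.swap} : Finset ((ι × π) × (ι × π))) = {P₀} from by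
            rw [hself]; simp, Finset.sum_singleton, hφ₀] at h5
          rcases mul_eq_zero.mp h5 with h | h
          · exact Units.ne_zero (w P₀.1.2) h
          · exact hP₀c h
        · rw [Finset.sum_pair (fun h => hself h.symm)] at h5
          by_cases horb : (P₀.1.1 = P₀.swap.1.1 ∧ P₀.2.1 = P₀.swap.2.1 ∧
              P₀.swap.1.2⁻¹ * P₀.swap.2.2 = P₀.1.2⁻¹ * P₀.2.2)
          · have h3 := horb.2.2
            have hxx : (P₀.1.2⁻¹ * P₀.2.2) * (P₀.1.2⁻¹ * P₀.2.2) = 1 := by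
              have h3' : P₀.2.2⁻¹ * P₀.1.2 = P₀.1.2⁻¹ * P₀.2.2 := h3
              calc (P₀.1.2⁻¹ * P₀.2.2) * (P₀.1.2⁻¹ * P₀.2.2)
                  = (P₀.1.2⁻¹ * P₀.2.2) * (P₀.2.2⁻¹ * P₀.1.2) := by rw [h3']
                _ = 1 := by group
            have hwx := h2 _ hxx
            have hwb : (w P₀.2.2 : ℤ) = (w P₀.1.2 : ℤ) := by
              have hb : P₀.2.2 = P₀.1.2 * (P₀.1.2⁻¹ * P₀.2.2) := by group
              rw [hb, map_mul, hwx, mul_one]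
            have hφ₁ : phiW w P₀.1.1 P₀.2.1 (P₀.1.2⁻¹ * P₀.2.2) P₀.swap
                = (w P₀.1.2 : ℤ) := by
              rw [phiW, if_pos horb]
              exact hwb
            rw [hφ₀, hφ₁, hsym] at h5
            have h6 : (2 : ℤ) * ((w P₀.1.2 : ℤ) * c P₀) = 0 := by linarith
            rcases mul_eq_zero.mp h6 with h | h
            · norm_num at h
            · rcases mul_eq_zero.mp h with h' | h'
              · exact Units.ne_zero (w P₀.1.2) h'
              · exact hP₀c h'
          · have hφ₁ : phiW w P₀.1.1 P₀.2.1 (P₀.1.2⁻¹ * P₀.2.2) P₀.swap = 0 :=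
              if_neg horb
            rw [hφ₀, hφ₁, zero_mul, add_zero] at h5
            rcases mul_eq_zero.mp h5 with h | h
            · exact Units.ne_zero (w P₀.1.2) h
            · exact hP₀c h

end FreeB
section FreeC

set_option linter.unusedSectionVars false
set_option synthInstance.maxHeartbeats 1000000
set_option maxHeartbeats 1000000

variable {π : Type*} [Group π] {ι : Type*} [Fintype ι] [DecidableEq ι] [DecidableEq π]

lemma span_transfer (w : π →* ℤˣ) (c : (ι × π) × (ι × π) →₀ ℤ)
    (hc : c ∈ Submodule.span ℤ {d : (ι × π) × (ι × π) →₀ ℤ |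
      ∃ (g : π) (e : (ι × π) × (ι × π) →₀ ℤ), (∀ Q, e Q.swap = e Q) ∧
        d = Finsupp.mapDomain (actP g) e - (w g : ℤ) • e}) :
    (EEq π ι).symm c ∈ gammaRel w (ι → MonoidAlgebra ℤ π) := by
  induction hc using Submodule.span_induction with
  | mem d hd =>
      obtain ⟨g, e, hesym, rfl⟩ := hd
      have he : Finsupp.mapDomain Prod.swap e = e := by
        ext Q
        have h1 : Finsupp.mapDomain Prod.swap e (Prod.swap Q.swap) = e Q.swap :=
          Finsupp.mapDomain_apply Prod.swap_injective e Q.swap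
        rw [Prod.swap_swap] at h1
        rw [h1, hesym]
      have heG : (EEq π ι).symm e ∈ Gamma (ι → MonoidAlgebra ℤ π) := by
        rw [mem_Gamma, ← EEq_symm_mapDomain_swap, he]
      rw [gammaRel_eq]
      apply Submodule.subset_span
      refine ⟨g, (EEq π ι).symm e, heG, ?_⟩
      rw [map_sub, EEq_symm_mapDomain_act, LinearEquiv.map_smul]
  | zero => rw [map_zero]; exact Submodule.zero_mem _
  | add a b _ _ ha hb => rw [map_add]; exact Submodule.add_mem _ ha hb
  | smul n a _ ha => rw [LinearEquiv.map_smul]; exact Submodule.smul_mem _ _ ha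

end FreeC

section FreeD

set_option linter.unusedSectionVars false
set_option synthInstance.maxHeartbeats 1000000
set_option maxHeartbeats 1000000

variable {π : Type*} [Group π]

lemma free_statement (w : π →* ℤˣ) (h2 : ∀ g : π, g * g = 1 → w g = 1)
    (ι : Type*) [Fintype ι] [DecidableEq ι] :
    ∀ y ∈ Gamma (ι → MonoidAlgebra ℤ π), BMap w (ι → MonoidAlgebra ℤ π) y = 0 →
      y ∈ gammaRel w (ι → MonoidAlgebra ℤ π) := by
  classical
  intro y hy hB
  set c := EEq π ι y with hcdef
  have hyc : (EEq π ι).symm c = y := LinearEquiv.symm_apply_apply _ _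
  have hsymm : ∀ P : (ι × π) × (ι × π), c P.swap = c P := by
    have h1 : Finsupp.mapDomain Prod.swap c = c := by
      apply (EEq π ι).symm.injective
      rw [EEq_symm_mapDomain_swap, hyc]
      exact mem_Gamma.mp hy
    intro P
    have h2' := Finsupp.mapDomain_apply Prod.swap_injective c P
    rw [h1] at h2'
    exact h2'
  have hBc : ∀ (i l : ι) (x : π), c.sum (fun P m => phiW w i l x P * m) = 0 := by
    intro i l x
    apply BMap_coeff w c i l x
    rw [hyc, hB]
    rfl
  exact hyc ▸ span_transfer w c (core_span w h2 c.support.card c le_rfl hsymm hBc)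

end FreeD
section Stable

set_option linter.unusedSectionVars false
set_option synthInstance.maxHeartbeats 1000000
set_option maxHeartbeats 1000000

variable {π : Type*} [Group π]

lemma twistedAug_single (v : π →* ℤˣ) (a : π) (c : ℤ) :
    twistedAug v (MonoidAlgebra.single a c) = c * (v a : ℤ) := by
  unfold twistedAug
  rw [MonoidAlgebra.lift_single]
  simp [smul_eq_mul]

lemma twistedAug_of (v : π →* ℤˣ) (g : π) :
    twistedAug v (MonoidAlgebra.of ℤ π g) = (v g : ℤ) := by
  unfold twistedAug
  rw [MonoidAlgebra.lift_of]
  rfl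

lemma units_int_sq (u : ℤˣ) : (u : ℤ) * (u : ℤ) = 1 := by
  rw [← Units.val_mul, Int.units_mul_self, Units.val_one]

variable (v : π →* ℤˣ) (j : ℕ)

/-- The inclusion `I × (ℤπ)^j → ℤπ^{1+j}`. -/
noncomputable def incl : (↥(twistedAugIdeal v) × (Fin j → MonoidAlgebra ℤ π))
    →ₗ[MonoidAlgebra ℤ π] (Option (Fin j) → MonoidAlgebra ℤ π) :=
  LinearMap.pi (fun o => o.elim
    ((twistedAugIdeal v).subtype ∘ₗ LinearMap.fst _ _ _)
    (fun m => LinearMap.proj m ∘ₗ LinearMap.snd _ _ _))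

lemma incl_none (u : ↥(twistedAugIdeal v) × (Fin j → MonoidAlgebra ℤ π)) :
    incl v j u none = (u.1 : MonoidAlgebra ℤ π) := rfl

lemma incl_some (u : ↥(twistedAugIdeal v) × (Fin j → MonoidAlgebra ℤ π)) (m : Fin j) :
    incl v j u (some m) = u.2 m := rfl

/-- The map `m₁ : F ⊗ F → F`, `u ⊗ x ↦ ε(u(none)) • x`. -/
noncomputable def m1L : (Option (Fin j) → MonoidAlgebra ℤ π) ⊗[ℤ]
    (Option (Fin j) → MonoidAlgebra ℤ π) →ₗ[ℤ] (Option (Fin j) → MonoidAlgebra ℤ π) :=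
  TensorProduct.lift (LinearMap.mk₂ ℤ (fun u x => twistedAug v (u none) • x)
    (fun u u' x => by
      show twistedAug v ((u + u') none) • x = _
      rw [Pi.add_apply, map_add, add_smul])
    (fun n u x => by
      show twistedAug v ((n • u) none) • x = n • (twistedAug v (u none) • x)
      rw [Pi.smul_apply, map_zsmul, smul_assoc])
    (fun u x x' => by
      show twistedAug v (u none) • (x + x') = _
      rw [smul_add])
    (fun n u x => by
      show twistedAug v (u none) • (n • x) = n • (twistedAug v (u none) • x)
      rw [smul_comm]))

lemma m1L_tmul (u x : Option (Fin j) → MonoidAlgebra ℤ π) :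
    m1L v j (u ⊗ₜ[ℤ] x) = twistedAug v (u none) • x := rfl

/-- Value of the section `s` on basis vectors. -/
noncomputable def sVal (p : Option (Fin j) × π) :
    (Option (Fin j) → MonoidAlgebra ℤ π) ⊗[ℤ] (Option (Fin j) → MonoidAlgebra ℤ π) :=
  p.1.elim ((v p.2 : ℤ) • (bas ((none : Option (Fin j)), p.2) ⊗ₜ[ℤ] bas (none, p.2)))
    (fun m => (v p.2 : ℤ) • (bas ((none : Option (Fin j)), p.2) ⊗ₜ[ℤ] bas (some m, p.2) +
      bas ((some m : Option (Fin j)), p.2) ⊗ₜ[ℤ] bas (none, p.2)))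

/-- The `ℤ`-linear section `s : F → Γ(F) ⊆ F ⊗ F`. -/
noncomputable def sL : (Option (Fin j) → MonoidAlgebra ℤ π) →ₗ[ℤ]
    (Option (Fin j) → MonoidAlgebra ℤ π) ⊗[ℤ] (Option (Fin j) → MonoidAlgebra ℤ π) :=
  (Finsupp.lsum ℤ (fun p => LinearMap.toSpanSingleton ℤ _ (sVal v j p))) ∘ₗ
    (eOneF π (Option (Fin j))).toLinearMap

lemma eOneF_bas {ι : Type*} [Fintype ι] [DecidableEq ι] (p : ι × π) :
    eOneF π ι (bas p) = Finsupp.single p 1 := by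
  have h := eOneF_symm_single (π := π) (ι := ι) p 1
  rw [one_smul] at h
  rw [← h, LinearEquiv.apply_symm_apply]

lemma sL_bas (p : Option (Fin j) × π) : sL v j (bas p) = sVal v j p := by
  unfold sL
  rw [LinearMap.comp_apply, LinearEquiv.coe_coe, eOneF_bas, Finsupp.lsum_single,
    LinearMap.toSpanSingleton_apply, one_smul]

lemma bas_none_none (a : π) :
    bas ((none : Option (Fin j)), a) none = MonoidAlgebra.single a 1 := by
  simp [bas]

lemma bas_some_none (m : Fin j) (a : π) :
    bas ((some m : Option (Fin j)), a) none = 0 := by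
  simp [bas, Pi.single_eq_of_ne (by simp : (none : Option (Fin j)) ≠ some m)]

lemma m1L_sVal (p : Option (Fin j) × π) : m1L v j (sVal v j p) = bas p := by
  obtain ⟨o, a⟩ := p
  cases o with
  | none =>
      show m1L v j ((v a : ℤ) • (bas ((none : Option (Fin j)), a) ⊗ₜ[ℤ] bas (none, a))) = _
      rw [map_smul, m1L_tmul, bas_none_none, twistedAug_single, one_mul, smul_smul,
        units_int_sq, one_smul]
  | some m =>
      show m1L v j ((v a : ℤ) • (bas ((none : Option (Fin j)), a) ⊗ₜ[ℤ] bas (some m, a) +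
        bas ((some m : Option (Fin j)), a) ⊗ₜ[ℤ] bas (none, a))) = _
      rw [map_smul, map_add, m1L_tmul, m1L_tmul, bas_none_none, bas_some_none,
        twistedAug_single, map_zero, one_mul, zero_smul, add_zero, smul_smul,
        units_int_sq, one_smul]

lemma m1L_sL (x : Option (Fin j) → MonoidAlgebra ℤ π) : m1L v j (sL v j x) = x := by
  obtain ⟨c, rfl⟩ : ∃ c, x = (eOneF π (Option (Fin j))).symm c :=
    ⟨_, (LinearEquiv.symm_apply_apply _ _).symm⟩
  induction c using Finsupp.induction_linear with
  | zero => simp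
  | add f f' hf hf' => rw [map_add, map_add, map_add, hf, hf']
  | single p n => simp only [eOneF_symm_single, map_smul, sL_bas, m1L_sVal]

lemma smul_pi_none (g : π) (u : Option (Fin j) → MonoidAlgebra ℤ π) :
    ((MonoidAlgebra.of ℤ π g) • u) none = MonoidAlgebra.of ℤ π g * u none := rfl

lemma m1L_Tg (g : π) (z : (Option (Fin j) → MonoidAlgebra ℤ π) ⊗[ℤ]
    (Option (Fin j) → MonoidAlgebra ℤ π)) :
    m1L v j (TgMap g _ z) = (v g : ℤ) • ((MonoidAlgebra.of ℤ π g) • m1L v j z) := by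
  induction z using TensorProduct.induction_on with
  | zero => simp
  | tmul u x =>
      show m1L v j (((MonoidAlgebra.of ℤ π g) • u) ⊗ₜ[ℤ] ((MonoidAlgebra.of ℤ π g) • x)) = _
      rw [m1L_tmul, m1L_tmul, smul_pi_none, map_mul, twistedAug_of, mul_smul]
      congr 1
      exact smul_comm _ _ _
  | add a b ha hb => simp only [map_add, ha, hb, smul_add]

end Stable
section Stable2

set_option linter.unusedSectionVars false
set_option synthInstance.maxHeartbeats 1000000
set_option maxHeartbeats 1000000

variable {π : Type*} [Group π] (v : π →* ℤˣ) (j : ℕ)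

lemma TgMap_tmul {M : Type*} [AddCommGroup M] [Module (MonoidAlgebra ℤ π) M]
    (g : π) (a b : M) :
    TgMap g M (a ⊗ₜ[ℤ] b) = ((MonoidAlgebra.of ℤ π g) • a) ⊗ₜ[ℤ]
      ((MonoidAlgebra.of ℤ π g) • b) := rfl

lemma sVal_act (g : π) (p : Option (Fin j) × π) :
    sVal v j (p.1, g * p.2) = (v g : ℤ) • TgMap g _ (sVal v j p) := by
  obtain ⟨o, a⟩ := p
  cases o with
  | none =>
      show (v (g * a) : ℤ) • (bas ((none : Option (Fin j)), g * a) ⊗ₜ[ℤ] bas (none, g * a)) =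
        (v g : ℤ) • TgMap g _ ((v a : ℤ) •
          (bas ((none : Option (Fin j)), a) ⊗ₜ[ℤ] bas (none, a)))
      rw [map_smul, TgMap_tmul]
      simp only [of_smul_bas, smul_smul]
      rw [map_mul]
      push_cast
      rfl
  | some m =>
      show (v (g * a) : ℤ) • (bas ((none : Option (Fin j)), g * a) ⊗ₜ[ℤ] bas (some m, g * a) +
          bas ((some m : Option (Fin j)), g * a) ⊗ₜ[ℤ] bas (none, g * a)) =
        (v g : ℤ) • TgMap g _ ((v a : ℤ) •
          (bas ((none : Option (Fin j)), a) ⊗ₜ[ℤ] bas (some m, a) +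
           bas ((some m : Option (Fin j)), a) ⊗ₜ[ℤ] bas (none, a)))
      rw [map_smul, map_add, TgMap_tmul, TgMap_tmul]
      simp only [of_smul_bas, smul_smul]
      rw [map_mul]
      push_cast
      rfl

lemma sL_of_smul (g : π) (x : Option (Fin j) → MonoidAlgebra ℤ π) :
    sL v j ((MonoidAlgebra.of ℤ π g) • x) = (v g : ℤ) • TgMap g _ (sL v j x) := by
  obtain ⟨c, rfl⟩ : ∃ c, x = (eOneF π (Option (Fin j))).symm c :=
    ⟨_, (LinearEquiv.symm_apply_apply _ _).symm⟩
  induction c using Finsupp.induction_linear with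
  | zero => simp
  | add f f' hf hf' => simp only [map_add, smul_add, hf, hf']
  | single p n =>
      rw [eOneF_symm_single]
      rw [show (MonoidAlgebra.of ℤ π g) • (n • bas p) = n • ((MonoidAlgebra.of ℤ π g) • bas p)
        from smul_comm _ _ _, of_smul_bas]
      simp only [map_smul, sL_bas, sVal_act]
      rw [smul_comm]

lemma comm_sVal (p : Option (Fin j) × π) :
    TensorProduct.comm ℤ _ _ (sVal v j p) = sVal v j p := by
  obtain ⟨o, a⟩ := p
  cases o with
  | none =>
      show TensorProduct.comm ℤ _ _ ((v a : ℤ) •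
        (bas ((none : Option (Fin j)), a) ⊗ₜ[ℤ] bas (none, a))) = _
      rw [LinearEquiv.map_smul, TensorProduct.comm_tmul]
      rfl
  | some m =>
      show TensorProduct.comm ℤ _ _ ((v a : ℤ) •
        (bas ((none : Option (Fin j)), a) ⊗ₜ[ℤ] bas (some m, a) +
         bas ((some m : Option (Fin j)), a) ⊗ₜ[ℤ] bas (none, a))) = _
      rw [LinearEquiv.map_smul, map_add, TensorProduct.comm_tmul, TensorProduct.comm_tmul,
        add_comm]
      rfl

lemma comm_sL (x : Option (Fin j) → MonoidAlgebra ℤ π) :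
    TensorProduct.comm ℤ _ _ (sL v j x) = sL v j x := by
  obtain ⟨c, rfl⟩ : ∃ c, x = (eOneF π (Option (Fin j))).symm c :=
    ⟨_, (LinearEquiv.symm_apply_apply _ _).symm⟩
  induction c using Finsupp.induction_linear with
  | zero => simp
  | add f f' hf hf' => simp only [map_add, hf, hf']
  | single p n => simp only [eOneF_symm_single, map_smul, LinearEquiv.map_smul, sL_bas, comm_sVal]

lemma m1L_incl (y : (↥(twistedAugIdeal v) × (Fin j → MonoidAlgebra ℤ π)) ⊗[ℤ]
    (↥(twistedAugIdeal v) × (Fin j → MonoidAlgebra ℤ π))) :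
    m1L v j (TensorProduct.map ((incl v j).restrictScalars ℤ)
      ((incl v j).restrictScalars ℤ) y) = 0 := by
  induction y using TensorProduct.induction_on with
  | zero => simp
  | tmul u x =>
      show m1L v j ((incl v j u) ⊗ₜ[ℤ] (incl v j x)) = 0
      rw [m1L_tmul, incl_none]
      rw [show twistedAug v (u.1 : MonoidAlgebra ℤ π) = 0 from RingHom.mem_ker.mp u.1.2]
      rw [zero_smul]
  | add a b ha hb => rw [map_add, map_add, ha, hb, add_zero]

/-- The `ℤ`-linear retraction `F → I × (ℤπ)^j`. -/
noncomputable def projN : (Option (Fin j) → MonoidAlgebra ℤ π) →ₗ[ℤ]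
    (↥(twistedAugIdeal v) × (Fin j → MonoidAlgebra ℤ π)) where
  toFun x := (⟨x none - (twistedAug v (x none)) • 1, by
      refine RingHom.mem_ker.mpr ?_
      show twistedAug v _ = 0
      rw [map_sub, map_zsmul, map_one, smul_eq_mul, mul_one, sub_self]⟩,
    fun m => x (some m))
  map_add' x y := by
    refine Prod.ext_iff.mpr ⟨Subtype.ext ?_, rfl⟩
    show (x + y) none - twistedAug v ((x + y) none) • 1 = _
    rw [Pi.add_apply, map_add, add_smul]
    show _ = (x none - twistedAug v (x none) • 1) + (y none - twistedAug v (y none) • 1)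
    abel
  map_smul' n x := by
    refine Prod.ext_iff.mpr ⟨Subtype.ext ?_, rfl⟩
    show (n • x) none - twistedAug v ((n • x) none) • 1 = n • (x none - twistedAug v (x none) • 1)
    rw [Pi.smul_apply, map_zsmul, smul_sub, smul_smul]
    rfl

lemma projN_incl (u : ↥(twistedAugIdeal v) × (Fin j → MonoidAlgebra ℤ π)) :
    projN v j (incl v j u) = u := by
  refine Prod.ext_iff.mpr ⟨Subtype.ext ?_, rfl⟩
  show incl v j u none - twistedAug v (incl v j u none) • 1 = (u.1 : MonoidAlgebra ℤ π)
  rw [incl_none, show twistedAug v (u.1 : MonoidAlgebra ℤ π) = 0 from RingHom.mem_ker.mp u.1.2,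
    zero_smul, sub_zero]

/-- The composite `q = incl ∘ projN` on `F`. -/
noncomputable def qL : (Option (Fin j) → MonoidAlgebra ℤ π) →ₗ[ℤ]
    (Option (Fin j) → MonoidAlgebra ℤ π) :=
  ((incl v j).restrictScalars ℤ) ∘ₗ projN v j

lemma qL_apply (x : Option (Fin j) → MonoidAlgebra ℤ π) :
    qL v j x = x - (twistedAug v (x none)) • Pi.single none 1 := by
  funext o
  cases o with
  | none =>
      show incl v j (projN v j x) none = _
      rw [incl_none]
      show x none - twistedAug v (x none) • 1 = _
      rw [Pi.sub_apply, Pi.smul_apply, Pi.single_eq_same]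
  | some m =>
      show incl v j (projN v j x) (some m) = _
      rw [incl_some]
      show x (some m) = _
      rw [Pi.sub_apply, Pi.smul_apply,
        Pi.single_eq_of_ne (by simp : (some m : Option (Fin j)) ≠ none), smul_zero, sub_zero]

end Stable2
section Stable3

set_option linter.unusedSectionVars false
set_option synthInstance.maxHeartbeats 1000000
set_option maxHeartbeats 1000000

variable {π : Type*} [Group π] (v : π →* ℤˣ) (j : ℕ)

lemma qL_tensor (z : (Option (Fin j) → MonoidAlgebra ℤ π) ⊗[ℤ]
      (Option (Fin j) → MonoidAlgebra ℤ π))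
    (hm : m1L v j z = 0) (hc : TensorProduct.comm ℤ _ _ z = z) :
    TensorProduct.map (qL v j) (qL v j) z = z := by
  have key : ∀ y : (Option (Fin j) → MonoidAlgebra ℤ π) ⊗[ℤ]
      (Option (Fin j) → MonoidAlgebra ℤ π),
      TensorProduct.map (qL v j) (qL v j) y =
        y - (Pi.single none 1 : Option (Fin j) → MonoidAlgebra ℤ π) ⊗ₜ[ℤ] (m1L v j y)
          - TensorProduct.comm ℤ _ _
            ((Pi.single none 1 : Option (Fin j) → MonoidAlgebra ℤ π) ⊗ₜ[ℤ]
              (m1L v j (TensorProduct.comm ℤ _ _ y)))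
          + (twistedAug v ((m1L v j y) none)) •
            ((Pi.single none 1 : Option (Fin j) → MonoidAlgebra ℤ π) ⊗ₜ[ℤ]
             (Pi.single none 1 : Option (Fin j) → MonoidAlgebra ℤ π)) := by
    intro y
    induction y using TensorProduct.induction_on with
    | zero => simp
    | tmul u x =>
        rw [show TensorProduct.map (qL v j) (qL v j) (u ⊗ₜ[ℤ] x) =
          (qL v j u) ⊗ₜ[ℤ] (qL v j x) from rfl, qL_apply, qL_apply]
        simp only [TensorProduct.comm_tmul, m1L_tmul]
        have hab : twistedAug v ((twistedAug v (u none) • x) none) =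
            twistedAug v (u none) * twistedAug v (x none) := by
          rw [Pi.smul_apply, map_zsmul, smul_eq_mul]
        rw [hab]
        simp only [TensorProduct.sub_tmul, TensorProduct.tmul_sub,
          TensorProduct.tmul_smul, ← TensorProduct.smul_tmul', smul_sub, smul_add,
          smul_smul]
        simp only [mul_comm]
        abel
    | add y₁ y₂ h₁ h₂ =>
        simp only [map_add, TensorProduct.tmul_add, Pi.add_apply, add_smul] at *
        rw [h₁, h₂]
        abel
  rw [key, hm, hc, hm]
  simp

lemma stable_statement (w : π →* ℤˣ) (h2 : ∀ g : π, g * g = 1 → w g = 1) :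
    ∀ y ∈ Gamma (↥(twistedAugIdeal v) × (Fin j → MonoidAlgebra ℤ π)),
      BMap w (↥(twistedAugIdeal v) × (Fin j → MonoidAlgebra ℤ π)) y = 0 →
      y ∈ gammaRel w (↥(twistedAugIdeal v) × (Fin j → MonoidAlgebra ℤ π)) := by
  intro y hy hB
  have hinj : Function.Injective
      (TensorProduct.map ((incl v j).restrictScalars ℤ) ((incl v j).restrictScalars ℤ)) := by
    intro a b hab
    have h1 := congrArg (TensorProduct.map (projN v j) (projN v j)) hab
    rwa [map_map_id _ _ (projN_incl v j), map_map_id _ _ (projN_incl v j)] at h1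
  set z := TensorProduct.map ((incl v j).restrictScalars ℤ)
    ((incl v j).restrictScalars ℤ) y with hz
  have hzG : z ∈ Gamma (Option (Fin j) → MonoidAlgebra ℤ π) := Gamma_map _ hy
  have hzB : BMap w (Option (Fin j) → MonoidAlgebra ℤ π) z = 0 := by
    funext f g'
    rw [hz, BMap_map, hB]
    rfl
  have hzRel : z ∈ gammaRel w (Option (Fin j) → MonoidAlgebra ℤ π) :=
    free_statement w h2 _ z hzG hzB
  have hm1z : m1L v j z = 0 := by rw [hz]; exact m1L_incl v j y
  set S : (Option (Fin j) → MonoidAlgebra ℤ π) ⊗[ℤ] (Option (Fin j) → MonoidAlgebra ℤ π)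
      →ₗ[ℤ] (Option (Fin j) → MonoidAlgebra ℤ π) ⊗[ℤ] (Option (Fin j) → MonoidAlgebra ℤ π) :=
    sL v j ∘ₗ m1L v j with hS
  have hz_fix : z - S z = z := by
    rw [hS, LinearMap.comp_apply, hm1z, map_zero, sub_zero]
  set genN : Set ((Option (Fin j) → MonoidAlgebra ℤ π) ⊗[ℤ]
      (Option (Fin j) → MonoidAlgebra ℤ π)) := {x | ∃ (g : π) (z' : (Option (Fin j) →
        MonoidAlgebra ℤ π) ⊗[ℤ] (Option (Fin j) → MonoidAlgebra ℤ π)),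
      TensorProduct.comm ℤ _ _ z' = z' ∧ m1L v j z' = 0 ∧
        x = TgMap g (Option (Fin j) → MonoidAlgebra ℤ π) z' - (w g : ℤ) • z'} with hgenN
  have hspan : z ∈ Submodule.span ℤ genN := by
    have hmap : Submodule.map (LinearMap.id - S)
        (gammaRel w (Option (Fin j) → MonoidAlgebra ℤ π)) ≤ Submodule.span ℤ genN := by
      rw [gammaRel_eq, Submodule.map_span, Submodule.span_le]
      rintro x ⟨d, ⟨g, y₀, hy₀, rfl⟩, rfl⟩
      apply Submodule.subset_span
      have hST : S (TgMap g (Option (Fin j) → MonoidAlgebra ℤ π) y₀) =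
          TgMap g (Option (Fin j) → MonoidAlgebra ℤ π) (S y₀) := by
        rw [hS, LinearMap.comp_apply, LinearMap.comp_apply, m1L_Tg, map_smul,
          sL_of_smul, smul_smul, units_int_sq, one_smul]
      refine ⟨g, y₀ - S y₀, ?_, ?_, ?_⟩
      · rw [map_sub, mem_Gamma.mp hy₀, hS, LinearMap.comp_apply, comm_sL]
      · rw [map_sub, hS, LinearMap.comp_apply, m1L_sL, sub_self]
      · have hSd : S (TgMap g (Option (Fin j) → MonoidAlgebra ℤ π) y₀ - (w g : ℤ) • y₀) =
            TgMap g (Option (Fin j) → MonoidAlgebra ℤ π) (S y₀) - (w g : ℤ) • S y₀ := by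
          rw [map_sub, map_smul, hST]
        rw [LinearMap.sub_apply, LinearMap.id_apply, hSd, map_sub, smul_sub]
        abel
    exact hmap (Submodule.mem_map.mpr ⟨z, hzRel, by
      rw [LinearMap.sub_apply, LinearMap.id_apply]; exact hz_fix⟩)
  have hsub2 : Submodule.span ℤ genN ≤ Submodule.map
      (TensorProduct.map ((incl v j).restrictScalars ℤ) ((incl v j).restrictScalars ℤ))
      (gammaRel w (↥(twistedAugIdeal v) × (Fin j → MonoidAlgebra ℤ π))) := by
    refine Submodule.span_le.mpr ?_
    rintro x ⟨g, z', hz'c, hz'm, rfl⟩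
    have hq := qL_tensor v j z' hz'm hz'c
    set y' := TensorProduct.map (projN v j) (projN v j) z' with hy'
    have hiy' : TensorProduct.map ((incl v j).restrictScalars ℤ)
        ((incl v j).restrictScalars ℤ) y' = z' := by
      rw [hy', ← LinearMap.comp_apply, ← TensorProduct.map_comp]
      exact hq
    have hy'G : y' ∈ Gamma (↥(twistedAugIdeal v) × (Fin j → MonoidAlgebra ℤ π)) :=
      Gamma_map _ (mem_Gamma.mpr hz'c)
    refine Submodule.mem_map.mpr
      ⟨TgMap g (↥(twistedAugIdeal v) × (Fin j → MonoidAlgebra ℤ π)) y' - (w g : ℤ) • y',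
        ?_, ?_⟩
    · rw [gammaRel_eq]
      exact Submodule.subset_span ⟨g, y', hy'G, rfl⟩
    · rw [map_sub, map_smul, TgMap_map, hiy']
  obtain ⟨y₂, hy₂, hy₂eq⟩ := hsub2 hspan
  have hyy : y₂ = y := hinj (hy₂eq.trans hz)
  exact hyy ▸ hy₂

end Stable3
/-- Let `π` be a group, `w, v : π → {±1}` homomorphisms such that there
is no `g ∈ π` of order two with `w g = −1`, and such that `v` is trivial on all elements
of order two in case `w` is nontrivial.  Suppose a `ℤπ`-module `A` satisfies
`A ⊕ ℤπᵏ ≅ Iπ^v ⊕ ℤπʲ` for some `k, j ≥ 0`.  Then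
`B_A : ℤ^w ⊗_{ℤπ} Γ(A) → Her^w(A^†)` is (defined and) injective: any symmetric tensor
`y ∈ Γ(A)` whose associated Hermitian pairing vanishes lies in the submodule of
coinvariance relations. -/
theorem BMap_injective_of_stably_twisted_augIdeal {π : Type*} [Group π]
    (w v : π →* ℤˣ)
    (h2 : ∀ g : π, g * g = 1 → w g = 1)
    (hv : w ≠ 1 → ∀ g : π, g * g = 1 → v g = 1)
    (A : Type*) [AddCommGroup A] [Module (MonoidAlgebra ℤ π) A]
    (k j : ℕ)
    (hstab : Nonempty ((A × (Fin k → MonoidAlgebra ℤ π)) ≃ₗ[MonoidAlgebra ℤ π]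
      (↥(twistedAugIdeal v) × (Fin j → MonoidAlgebra ℤ π)))) :
    ∀ y ∈ Gamma A, BMap w A y = 0 → y ∈ gammaRel w A := by
  obtain ⟨e⟩ := hstab
  exact statement_transfer w (LinearMap.inl _ _ _) (LinearMap.fst _ _ _) (fun x => rfl)
    (statement_transfer w e.toLinearMap e.symm.toLinearMap (fun x => e.symm_apply_apply x)
      (stable_statement v j w h2))

end Paper
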